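/- arXiv:2210.16189 — 2 statements merged into one kernel-verified Lean document; each statement's English description precedes it below -/
import Mathlib

section
/- Let N ≥ 1, n ≥ 1 be integers, let p : Fin N → ℝ be a probability vector with p i > 0 and ∑ i, p i = 1, let I₁, …, I_n be i.i.d. random indices with P(I_k = i) = p i, and let θ, θ̂ ∈ ℝ^d. Let f_1, …, f_N : ℝ^d → ℝ be differentiable with gradients ∇f_i, and suppose there are constants L_i ≥ 0 such that ‖∇f_i(θ') − ∇f_i(θ'')‖ ≤ L_i ‖θ' − θ''‖ for all θ', θ'' ∈ ℝ^d. Then the pseudo-variance of the control-variate estimator g̃ = c + (1/n) ∑_{k=1}^n (1/p(I_k)) • (∇f_{I_k}(θ) − ∇f_{I_k}(θ̂)), where c = ∑_i ∇f_i(θ̂) + v₀ for any fixed vector v₀, satisfies E[‖g̃ − E[g̃]‖²] ≤ (1/n) ‖θ − θ̂‖² ∑_{i=1}^N L_i² / p(i). -/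
/-!
Write `φ i = (p i)⁻¹ • (∇f_i(θ) - ∇f_i(θ̂))` and `X k = φ (I k)`. The estimator is an affine image
`c + (1/n) • ∑ k, X k` of a sum of independent square-integrable vectors, so the cross terms of
its variance vanish and it equals `(1/n)² ∑ k Var(X k) ≤ (1/n)² ∑ k E‖X k‖² = (1/n) ∑ i, p i ‖φ i‖²`.
Finally `p i ‖φ i‖² = ‖∇f_i(θ) - ∇f_i(θ̂)‖² / p i ≤ L i² ‖θ - θ̂‖² / p i` by the Lipschitz bound.
-/

open MeasureTheory ProbabilityTheory

section Normed

variable {Ω E : Type*} [MeasurableSpace Ω] {μ : Measure Ω}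
  [NormedAddCommGroup E] [NormedSpace ℝ E] [CompleteSpace E]

theorem integral_comp_eq_sum_measureReal_preimage [IsFiniteMeasure μ] {α : Type*} [Fintype α]
    [MeasurableSpace α] [MeasurableSingletonClass α] {X : Ω → α} (hX : Measurable X)
    (F : α → E) :
    ∫ ω, F (X ω) ∂μ = ∑ a, μ.real (X ⁻¹' {a}) • F a := by
  rw [← integral_map hX.aemeasurable AEStronglyMeasurable.of_discrete,
    integral_fintype .of_finite]
  simp_rw [map_measureReal_apply hX (measurableSet_singleton _)]

theorem integral_norm_const_add_smul_sub_integral_sq [IsProbabilityMeasure μ] {Y : Ω → E}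
    (hY : Integrable Y μ) (c : E) (a : ℝ) :
    ∫ ω, ‖c + a • Y ω - ∫ ω', (c + a • Y ω') ∂μ‖ ^ 2 ∂μ
      = a ^ 2 * ∫ ω, ‖Y ω - ∫ ω', Y ω' ∂μ‖ ^ 2 ∂μ := by
  have hmean : ∫ ω, (c + a • Y ω) ∂μ = c + a • ∫ ω, Y ω ∂μ := by
    have haY : Integrable (fun ω => a • Y ω) μ := hY.smul a
    rw [integral_add (integrable_const c) haY, integral_const, integral_smul, probReal_univ,
      one_smul]
  have hcentered : ∀ ω, c + a • Y ω - (c + a • ∫ ω', Y ω' ∂μ) = a • (Y ω - ∫ ω', Y ω' ∂μ) :=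
    fun ω => by rw [smul_sub]; abel
  simp_rw [hmean, hcentered, norm_smul, mul_pow, Real.norm_eq_abs, sq_abs]
  exact integral_const_mul _ _

end Normed

section Inner

variable {Ω E : Type*} [MeasurableSpace Ω] {μ : Measure Ω}
  [NormedAddCommGroup E] [InnerProductSpace ℝ E] [CompleteSpace E]

theorem integral_norm_sub_integral_sq [IsProbabilityMeasure μ] {X : Ω → E} (hX : MemLp X 2 μ) :
    ∫ ω, ‖X ω - ∫ ω', X ω' ∂μ‖ ^ 2 ∂μ = ∫ ω, ‖X ω‖ ^ 2 ∂μ - ‖∫ ω, X ω ∂μ‖ ^ 2 := by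
  set m := ∫ ω, X ω ∂μ
  have hXi : Integrable X μ := hX.integrable one_le_two
  have hinner : ∫ ω, inner ℝ (X ω) m ∂μ = ‖m‖ ^ 2 := by
    simp_rw [real_inner_comm m]
    rw [integral_inner hXi, real_inner_self_eq_norm_sq]
  have hsq : Integrable (fun ω => ‖X ω‖ ^ 2) μ := hX.integrable_norm_pow two_ne_zero
  have hcross : Integrable (fun ω => 2 * inner ℝ (X ω) m) μ := (hXi.inner_const m).const_mul 2
  have hdiff : Integrable (fun ω => ‖X ω‖ ^ 2 - 2 * inner ℝ (X ω) m) μ := hsq.sub hcross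
  simp_rw [norm_sub_sq_real]
  rw [integral_add hdiff (integrable_const _), integral_sub hsq hcross, integral_const_mul,
    integral_const, hinner, probReal_univ, one_smul]
  ring

variable [MeasurableSpace E] [BorelSpace E]

theorem integral_norm_sum_sq_of_pairwise_indepFun [IsFiniteMeasure μ] {ι : Type*} [Fintype ι]
    {X : ι → Ω → E} (hindep : Pairwise fun j k => IndepFun (X j) (X k) μ)
    (hX : ∀ k, MemLp (X k) 2 μ) (hmean : ∀ k, ∫ ω, X k ω ∂μ = 0) :
    ∫ ω, ‖∑ k, X k ω‖ ^ 2 ∂μ = ∑ k, ∫ ω, ‖X k ω‖ ^ 2 ∂μ := by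
  have hXi : ∀ k, Integrable (X k) μ := fun k => (hX k).integrable one_le_two
  have hcross : ∀ j k, j ≠ k → ∫ ω, inner ℝ (X j ω) (X k ω) ∂μ = 0 := fun j k hjk =>
    ((hindep hjk).integral_bilin (hXi j) (hXi k) (innerSL ℝ)).trans (by simp [hmean])
  have hint : ∀ j k, Integrable (fun ω => inner ℝ (X j ω) (X k ω)) μ := fun j k => by
    rcases eq_or_ne j k with rfl | hjk
    · simpa [real_inner_self_eq_norm_sq] using (hX j).integrable_norm_pow two_ne_zero
    · exact (hindep hjk).integrable_bilin (hXi j) (hXi k) (innerSL ℝ)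
  simp_rw [← real_inner_self_eq_norm_sq, sum_inner, inner_sum]
  rw [integral_finsetSum _ fun j _ => integrable_finsetSum _ fun k _ => hint j k]
  refine Finset.sum_congr rfl fun j _ => ?_
  rw [integral_finsetSum _ fun k _ => hint j k,
    Finset.sum_eq_single j (fun k _ hkj => hcross j k (Ne.symm hkj)) (by simp)]

theorem integral_norm_sum_sub_integral_sq [IsProbabilityMeasure μ] {ι : Type*} [Fintype ι]
    {X : ι → Ω → E} (hindep : Pairwise fun j k => IndepFun (X j) (X k) μ)
    (hX : ∀ k, MemLp (X k) 2 μ) :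
    ∫ ω, ‖∑ k, X k ω - ∫ ω', ∑ k, X k ω' ∂μ‖ ^ 2 ∂μ
      = ∑ k, ∫ ω, ‖X k ω - ∫ ω', X k ω' ∂μ‖ ^ 2 ∂μ := by
  have hXi : ∀ k, Integrable (X k) μ := fun k => (hX k).integrable one_le_two
  rw [integral_finsetSum _ fun k _ => hXi k]
  simp_rw [← Finset.sum_sub_distrib]
  refine integral_norm_sum_sq_of_pairwise_indepFun (fun j k hjk => ?_)
    (fun k => (hX k).sub (memLp_const _)) fun k => ?_
  · exact (hindep hjk).comp (measurable_id.sub_const _) (measurable_id.sub_const _)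
  · rw [integral_sub (hXi k) (integrable_const _), integral_const, probReal_univ, one_smul,
      sub_self]

end Inner

theorem mul_norm_inv_smul_sq_le {E : Type*} [NormedAddCommGroup E] [NormedSpace ℝ E]
    {p L r : ℝ} {v : E} (hp : 0 ≤ p) (hv : ‖v‖ ≤ L * r) :
    p * ‖p⁻¹ • v‖ ^ 2 ≤ r ^ 2 * (L ^ 2 / p) := by
  calc p * ‖p⁻¹ • v‖ ^ 2 = ‖v‖ ^ 2 / p := by
        rw [norm_smul, norm_inv, Real.norm_of_nonneg hp]
        rcases hp.eq_or_lt with rfl | hp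
        · simp
        · field_simp
    _ ≤ (L * r) ^ 2 / p := by gcongr
    _ = r ^ 2 * (L ^ 2 / p) := by ring

theorem pseudoVariance_cv_bound_general
    {N n d : ℕ}
    {Ω : Type*} [MeasurableSpace Ω] (μ : Measure Ω) [IsProbabilityMeasure μ]
    (I : Fin n → Ω → Fin N)
    (hmeas : ∀ k, Measurable (I k))
    (hindep : iIndepFun I μ)
    (p : Fin N → ℝ) (hp : ∀ i, 0 < p i)
    (hlaw : ∀ k i, μ (I k ⁻¹' {i}) = ENNReal.ofReal (p i))
    (θ θhat : EuclideanSpace ℝ (Fin d))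
    (f : Fin N → EuclideanSpace ℝ (Fin d) → ℝ)
    (L : Fin N → ℝ)
    (hLip : ∀ i (θ' θ'' : EuclideanSpace ℝ (Fin d)),
      ‖gradient (f i) θ' - gradient (f i) θ''‖ ≤ L i * ‖θ' - θ''‖)
    (v₀ : EuclideanSpace ℝ (Fin d))
    (G : Ω → EuclideanSpace ℝ (Fin d))
    (hG : ∀ ω, G ω = ((∑ i, gradient (f i) θhat) + v₀)
      + (1 / (n : ℝ)) • ∑ k, (p (I k ω))⁻¹ •
          (gradient (f (I k ω)) θ - gradient (f (I k ω)) θhat)) :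
    ∫ ω, ‖G ω - ∫ ω', G ω' ∂μ‖ ^ 2 ∂μ
      ≤ (1 / (n : ℝ)) * ‖θ - θhat‖ ^ 2 * ∑ i, (L i) ^ 2 / p i := by
  set φ : Fin N → EuclideanSpace ℝ (Fin d) :=
    fun i => (p i)⁻¹ • (gradient (f i) θ - gradient (f i) θhat)
  set X : Fin n → Ω → EuclideanSpace ℝ (Fin d) := fun k ω => φ (I k ω)
  have hX : ∀ k, MemLp (X k) 2 μ := fun k =>
    (MemLp.of_discrete (μ := μ.map (I k)) (f := φ)).comp_of_map (hmeas k).aemeasurable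
  have hXindep : Pairwise fun j k => IndepFun (X j) (X k) μ := fun j k hjk =>
    (hindep.indepFun hjk).comp (measurable_of_finite φ) (measurable_of_finite φ)
  have hsecond : ∀ k, ∫ ω, ‖X k ω‖ ^ 2 ∂μ = ∑ i, p i * ‖φ i‖ ^ 2 := fun k => by
    rw [integral_comp_eq_sum_measureReal_preimage (hmeas k) (fun i => ‖φ i‖ ^ 2)]
    simp [measureReal_def, hlaw, (hp _).le]
  have hn : (1 / n : ℝ) ^ 2 * n = 1 / n := by
    rcases eq_or_ne (n : ℝ) 0 with h | h
    · simp [h]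
    · field_simp
  rw [show G = fun ω => _ + (1 / n : ℝ) • ∑ k, X k ω from funext hG,
    integral_norm_const_add_smul_sub_integral_sq
      (integrable_finsetSum _ fun k _ => (hX k).integrable one_le_two),
    integral_norm_sum_sub_integral_sq hXindep hX]
  calc (1 / n : ℝ) ^ 2 * ∑ k, ∫ ω, ‖X k ω - ∫ ω', X k ω' ∂μ‖ ^ 2 ∂μ
      ≤ (1 / n : ℝ) ^ 2 * ∑ k : Fin n, ∑ i, p i * ‖φ i‖ ^ 2 := by
        refine mul_le_mul_of_nonneg_left (Finset.sum_le_sum fun k _ => ?_) (by positivity)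
        rw [integral_norm_sub_integral_sq (hX k), ← hsecond k]
        exact sub_le_self _ (sq_nonneg _)
    _ = (1 / n : ℝ) * ∑ i, p i * ‖φ i‖ ^ 2 := by
        rw [Finset.sum_const, Finset.card_univ, Fintype.card_fin, nsmul_eq_mul, ← mul_assoc, hn]
    _ ≤ (1 / n : ℝ) * ‖θ - θhat‖ ^ 2 * ∑ i, (L i) ^ 2 / p i := by
        rw [mul_assoc, Finset.mul_sum _ _ (‖θ - θhat‖ ^ 2)]
        exact mul_le_mul_of_nonneg_left (Finset.sum_le_sum fun i _ =>
          mul_norm_inv_smul_sq_le (hp i).le (hLip i θ θhat)) (by positivity)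

/-- Lemma 3.3: under Lipschitz continuity of the gradients, the pseudo-variance
of the SGLD-CV-PS gradient estimator is bounded by
`(1/n) ‖θ − θ̂‖² ∑ i, L i ² / p i`. -/
theorem pseudoVariance_cv_bound
    {N n d : ℕ} (hN : 1 ≤ N) (hn : 1 ≤ n)
    {Ω : Type*} [MeasurableSpace Ω] (μ : Measure Ω) [IsProbabilityMeasure μ]
    (I : Fin n → Ω → Fin N)
    (hmeas : ∀ k, Measurable (I k))
    (hindep : iIndepFun I μ)
    (p : Fin N → ℝ) (hp : ∀ i, 0 < p i) (hsum : ∑ i, p i = 1)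
    (hlaw : ∀ k i, μ (I k ⁻¹' {i}) = ENNReal.ofReal (p i))
    (θ θhat : EuclideanSpace ℝ (Fin d))
    (f : Fin N → EuclideanSpace ℝ (Fin d) → ℝ)
    (hdiff : ∀ i, Differentiable ℝ (f i))
    (L : Fin N → ℝ) (hL : ∀ i, 0 ≤ L i)
    (hLip : ∀ i (θ' θ'' : EuclideanSpace ℝ (Fin d)),
      ‖gradient (f i) θ' - gradient (f i) θ''‖ ≤ L i * ‖θ' - θ''‖)
    (v₀ : EuclideanSpace ℝ (Fin d))
    (G : Ω → EuclideanSpace ℝ (Fin d))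
    (hG : ∀ ω, G ω = ((∑ i, gradient (f i) θhat) + v₀)
      + (1 / (n : ℝ)) • ∑ k, (p (I k ω))⁻¹ •
          (gradient (f (I k ω)) θ - gradient (f (I k ω)) θhat)) :
    ∫ ω, ‖G ω - ∫ ω', G ω' ∂μ‖ ^ 2 ∂μ
      ≤ (1 / (n : ℝ)) * ‖θ - θhat‖ ^ 2 * ∑ i, (L i) ^ 2 / p i :=
  pseudoVariance_cv_bound_general μ I hmeas hindep p hp hlaw θ θhat f L hLip v₀ G hG
end

section
/- Let N ≥ 1, n ≥ 1 be integers, let p : Fin N → ℝ be a probability vector with p i > 0 and ∑ i, p i = 1, let I₁, …, I_n be i.i.d. random indices with P(I_k = i) = p i, let θ, θ̂ ∈ ℝ^d, and let f_1, …, f_N : ℝ^d → ℝ be differentiable with L_i-Lipschitz gradients (‖∇f_i(θ') − ∇f_i(θ'')‖ ≤ L_i‖θ' − θ''‖). Fix V₀ > 0. If the subsample size satisfies n > (1/V₀) ‖θ − θ̂‖² ∑_{i=1}^N L_i²/p(i), then the pseudo-variance of the control-variate estimator g̃ = c + (1/n) ∑_{k=1}^n (1/p(I_k)) • (∇f_{I_k}(θ)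 − ∇f_{I_k}(θ̂)) (with c any fixed vector) is strictly less than V₀: E[‖g̃ − E[g̃]‖²] < V₀. -/
open MeasureTheory ProbabilityTheory
open scoped ENNReal

/-! Writing `Zₖ = p(Iₖ)⁻¹ • (∇f_{Iₖ}(θ) − ∇f_{Iₖ}(θ̂))`, the estimator is `c + (1/n) ∑ₖ Zₖ` with
pairwise independent `Zₖ`. Coordinatewise, variances of independent sums add, so the
pseudo-variance is `(1/n²) ∑ₖ` of those of the `Zₖ`. Each of these is at most the second moment
`E‖Zₖ‖² = ∑ᵢ ‖∇fᵢ(θ) − ∇fᵢ(θ̂)‖² / pᵢ ≤ ‖θ − θ̂‖² ∑ᵢ Lᵢ²/pᵢ`, so the pseudo-variance is at most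
`‖θ − θ̂‖² ∑ᵢ Lᵢ²/pᵢ / n`, which the choice of `n` puts below `V₀`. -/

noncomputable def pseudoVariance {Ω E : Type*} [MeasurableSpace Ω] [NormedAddCommGroup E]
    [NormedSpace ℝ E] (X : Ω → E) (μ : Measure Ω) : ℝ :=
  ∫ ω, ‖X ω - ∫ ω', X ω' ∂μ‖ ^ 2 ∂μ

section FiniteRange

variable {Ω α E : Type*} [MeasurableSpace Ω] {μ : Measure Ω} [MeasurableSpace α]
  [NormedAddCommGroup E] {J : Ω → α}

lemma memLp_comp_of_finite [Finite α] [DiscreteMeasurableSpace α] [IsFiniteMeasure μ]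
    (hJ : Measurable J) (g : α → E) {q : ℝ≥0∞} : MemLp (fun ω => g (J ω)) q μ :=
  MemLp.of_discrete.comp_of_map hJ.aemeasurable

lemma integral_comp_eq_sum_measureReal_preimage_s9 [Fintype α] [DiscreteMeasurableSpace α]
    [IsFiniteMeasure μ] [NormedSpace ℝ E] [CompleteSpace E] (hJ : Measurable J) (g : α → E) :
    ∫ ω, g (J ω) ∂μ = ∑ i, μ.real (J ⁻¹' {i}) • g i := by
  rw [← integral_map hJ.aemeasurable StronglyMeasurable.of_discrete.aestronglyMeasurable,
    integral_fintype Integrable.of_finite]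
  simp_rw [map_measureReal_apply hJ (measurableSet_singleton _)]

end FiniteRange

section PseudoVariance

variable {Ω ι : Type*} [MeasurableSpace Ω] {μ : Measure Ω} [Fintype ι]

lemma pseudoVariance_eq_sum_variance [IsFiniteMeasure μ] {X : Ω → EuclideanSpace ℝ ι}
    (hX : MemLp X 2 μ) : pseudoVariance X μ = ∑ t, Var[fun ω => X ω t; μ] := by
  have hcoord : ∀ t, MemLp (fun ω => X ω t) 2 μ := hX.eval_piLp
  have hmean : ∀ t, (∫ ω, X ω ∂μ) t = ∫ ω, X ω t ∂μ :=
    eval_integral_piLp fun t => (hcoord t).integrable one_le_two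
  simp_rw [pseudoVariance, EuclideanSpace.real_norm_sq_eq, PiLp.sub_apply, hmean]
  have hsq : ∀ t, Integrable (fun ω => (X ω t - ∫ ω', X ω' t ∂μ) ^ 2) μ := fun t =>
    ((hcoord t).sub (memLp_const _)).integrable_sq
  rw [integral_finsetSum _ fun t _ => hsq t]
  exact Finset.sum_congr rfl fun t _ => (variance_eq_integral (hcoord t).aemeasurable).symm

lemma pseudoVariance_le_integral_norm_sq [IsProbabilityMeasure μ] {X : Ω → EuclideanSpace ℝ ι}
    (hX : MemLp X 2 μ) : pseudoVariance X μ ≤ ∫ ω, ‖X ω‖ ^ 2 ∂μ := by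
  simp_rw [pseudoVariance_eq_sum_variance hX, EuclideanSpace.real_norm_sq_eq]
  rw [integral_finsetSum _ fun t _ => (hX.eval_piLp t).integrable_sq]
  exact Finset.sum_le_sum fun t _ =>
    variance_le_expectation_sq (hX.eval_piLp t).aestronglyMeasurable

lemma pseudoVariance_const_add_smul_sum [IsProbabilityMeasure μ] {κ : Type*} [Fintype κ]
    {X : κ → Ω → EuclideanSpace ℝ ι} (hX : ∀ k, MemLp (X k) 2 μ)
    (hindep : Pairwise fun k l => X k ⟂ᵢ[μ] X l) (c : EuclideanSpace ℝ ι) (a : ℝ) :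
    pseudoVariance (fun ω => c + a • ∑ k, X k ω) μ = a ^ 2 * ∑ k, pseudoVariance (X k) μ := by
  have hmean : MemLp (fun ω => c + a • ∑ k, X k ω) 2 μ :=
    (memLp_const c).add ((memLp_finsetSum _ fun k _ => hX k).const_smul a)
  simp_rw [pseudoVariance_eq_sum_variance hmean, pseudoVariance_eq_sum_variance (hX _),
    Finset.mul_sum]
  rw [Finset.sum_comm]
  refine Finset.sum_congr rfl fun t _ => ?_
  have hcoord : ∀ k, MemLp (fun ω => X k ω t) 2 μ := fun k => (hX k).eval_piLp t
  have hcoord_indep : Pairwise fun k l => (fun ω => X k ω t) ⟂ᵢ[μ] (fun ω => X l ω t) :=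
    fun k l hkl => (hindep hkl).comp (EuclideanSpace.proj t).continuous.measurable
      (EuclideanSpace.proj t).continuous.measurable
  calc Var[fun ω => (c + a • ∑ k, X k ω) t; μ]
      = Var[fun ω => c t + a * (∑ k, fun ω => X k ω t) ω; μ] := by simp
    _ = a ^ 2 * Var[∑ k, fun ω => X k ω t; μ] := by
      rw [variance_const_add ((memLp_finsetSum' _ fun k _ => hcoord k).1.const_mul a),
        variance_const_mul]
    _ = ∑ k, a ^ 2 * Var[fun ω => X k ω t; μ] := by
      rw [IndepFun.variance_sum (fun k _ => hcoord k) fun k _ l _ hkl => hcoord_indep hkl,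
        Finset.mul_sum]

end PseudoVariance

lemma mul_norm_inv_smul_sq_le_s9 {E : Type*} [NormedAddCommGroup E] [NormedSpace ℝ E]
    {q K r : ℝ} {u : E} (hq : 0 < q) (hu : ‖u‖ ≤ K * r) :
    q * ‖q⁻¹ • u‖ ^ 2 ≤ r ^ 2 * (K ^ 2 / q) := by
  have hu_sq : ‖u‖ ^ 2 ≤ (K * r) ^ 2 := pow_le_pow_left₀ (norm_nonneg u) hu 2
  rw [norm_smul, Real.norm_of_nonneg (inv_nonneg.2 hq.le)]
  calc q * (q⁻¹ * ‖u‖) ^ 2 = ‖u‖ ^ 2 / q := by field_simp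
    _ ≤ (K * r) ^ 2 / q := by gcongr
    _ = r ^ 2 * (K ^ 2 / q) := by ring

open Finset in
theorem adaptive_subsample_size_controls_pseudoVariance_general
    {N n d : ℕ}
    {Ω : Type*} [MeasurableSpace Ω] (μ : Measure Ω) [IsProbabilityMeasure μ]
    (I : Fin n → Ω → Fin N)
    (hmeas : ∀ k, Measurable (I k))
    (hindep : iIndepFun I μ)
    (p : Fin N → ℝ) (hp : ∀ i, 0 < p i)
    (hlaw : ∀ k i, μ (I k ⁻¹' {i}) = ENNReal.ofReal (p i))
    (θ θhat : EuclideanSpace ℝ (Fin d))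
    (f : Fin N → EuclideanSpace ℝ (Fin d) → ℝ)
    (L : Fin N → ℝ)
    (hLip : ∀ i (θ' θ'' : EuclideanSpace ℝ (Fin d)),
      ‖gradient (f i) θ' - gradient (f i) θ''‖ ≤ L i * ‖θ' - θ''‖)
    (V₀ : ℝ) (hV₀ : 0 < V₀)
    (hn_big : (n : ℝ) > (1 / V₀) * ‖θ - θhat‖ ^ 2 * ∑ i, (L i) ^ 2 / p i)
    (c : EuclideanSpace ℝ (Fin d))
    (G : Ω → EuclideanSpace ℝ (Fin d))
    (hG : ∀ ω, G ω = c
      + (1 / (n : ℝ)) • ∑ k, (p (I k ω))⁻¹ •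
          (gradient (f (I k ω)) θ - gradient (f (I k ω)) θhat)) :
    ∫ ω, ‖G ω - ∫ ω', G ω' ∂μ‖ ^ 2 ∂μ < V₀ := by
  set z : Fin N → EuclideanSpace ℝ (Fin d) :=
    fun i => (p i)⁻¹ • (gradient (f i) θ - gradient (f i) θhat)
  rw [mul_assoc, one_div_mul_eq_div, gt_iff_lt, div_lt_iff₀ hV₀] at hn_big
  set B := ‖θ - θhat‖ ^ 2 * ∑ i, L i ^ 2 / p i with hB_def
  have hB : 0 ≤ B :=
    mul_nonneg (sq_nonneg _) (sum_nonneg fun i _ => div_nonneg (sq_nonneg _) (hp i).le)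
  have hn : (0 : ℝ) < n := pos_of_mul_pos_left (hB.trans_lt hn_big) hV₀.le
  have hZ : ∀ k, MemLp (fun ω => z (I k ω)) 2 μ := fun k => memLp_comp_of_finite (hmeas k) z
  have hZ_indep : Pairwise fun k l => (fun ω => z (I k ω)) ⟂ᵢ[μ] (fun ω => z (I l ω)) :=
    fun k l hkl => (hindep.indepFun hkl).comp (measurable_of_finite z) (measurable_of_finite z)
  have hZ_sq : ∀ k, ∫ ω, ‖z (I k ω)‖ ^ 2 ∂μ ≤ B := fun k => by
    rw [integral_comp_eq_sum_measureReal_preimage_s9 (hmeas k) fun i => ‖z i‖ ^ 2, hB_def,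
      mul_sum]
    refine sum_le_sum fun i _ => ?_
    rw [measureReal_def, hlaw, ENNReal.toReal_ofReal (hp i).le, smul_eq_mul]
    exact mul_norm_inv_smul_sq_le_s9 (hp i) (hLip i θ θhat)
  change pseudoVariance G μ < V₀
  calc pseudoVariance G μ = (1 / n) ^ 2 * ∑ k, pseudoVariance (fun ω => z (I k ω)) μ := by
        rw [funext hG]
        exact pseudoVariance_const_add_smul_sum hZ hZ_indep c _
    _ ≤ (1 / n) ^ 2 * ∑ k : Fin n, B := by
        gcongr with k
        exact (pseudoVariance_le_integral_norm_sq (hZ k)).trans (hZ_sq k)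
    _ = B / n := by
        rw [sum_const, card_univ, Fintype.card_fin, nsmul_eq_mul]
        field_simp
    _ < V₀ := by rw [div_lt_iff₀ hn]; linarith

/-- Adaptive subsample-size criterion (Eq. 17): if the subsample size `n`
exceeds `(1/V₀) ‖θ − θ̂‖² ∑ i, L i ² / p i`, then the pseudo-variance of the
SGLD-CV-PS gradient estimator is strictly below the threshold `V₀`. -/
theorem adaptive_subsample_size_controls_pseudoVariance
    {N n d : ℕ} (hN : 1 ≤ N) (hn : 1 ≤ n)
    {Ω : Type*} [MeasurableSpace Ω] (μ : Measure Ω) [IsProbabilityMeasure μ]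
    (I : Fin n → Ω → Fin N)
    (hmeas : ∀ k, Measurable (I k))
    (hindep : iIndepFun I μ)
    (p : Fin N → ℝ) (hp : ∀ i, 0 < p i) (hsum : ∑ i, p i = 1)
    (hlaw : ∀ k i, μ (I k ⁻¹' {i}) = ENNReal.ofReal (p i))
    (θ θhat : EuclideanSpace ℝ (Fin d))
    (f : Fin N → EuclideanSpace ℝ (Fin d) → ℝ)
    (hdiff : ∀ i, Differentiable ℝ (f i))
    (L : Fin N → ℝ) (hL : ∀ i, 0 ≤ L i)
    (hLip : ∀ i (θ' θ'' : EuclideanSpace ℝ (Fin d)),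
      ‖gradient (f i) θ' - gradient (f i) θ''‖ ≤ L i * ‖θ' - θ''‖)
    (V₀ : ℝ) (hV₀ : 0 < V₀)
    (hn_big : (n : ℝ) > (1 / V₀) * ‖θ - θhat‖ ^ 2 * ∑ i, (L i) ^ 2 / p i)
    (c : EuclideanSpace ℝ (Fin d))
    (G : Ω → EuclideanSpace ℝ (Fin d))
    (hG : ∀ ω, G ω = c
      + (1 / (n : ℝ)) • ∑ k, (p (I k ω))⁻¹ •
          (gradient (f (I k ω)) θ - gradient (f (I k ω)) θhat)) :
    ∫ ω, ‖G ω - ∫ ω', G ω' ∂μ‖ ^ 2 ∂μ < V₀ :=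
  adaptive_subsample_size_controls_pseudoVariance_general μ I hmeas hindep p hp hlaw θ θhat f L hLip
    V₀ hV₀ hn_big c G hG
end
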